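/- arXiv:2306.15781 — 2 statements merged into one kernel-verified Lean document; each statement's English description precedes it below -/
import Mathlib

section
/- With Q_∞ := ∫₀^∞ e^{Ct} Q e^{C*t} dt, the integration-by-parts identity (-C)^{-1} Q_∞ = (-C)^{-1} Q ((-C)^{-1})^* − Q_∞ ((-C)^{-1})^* holds, and hence the symmetric part Sym((-C)^{-1} Q_∞) := (1/2)[(-C)^{-1} Q_∞ + Q_∞ ((-C)^{-1})^*] equals (1/2)(-C)^{-1} Q ((-C)^{-1})^*. -/
/-! Since `C` is bounded, the semigroup is `S t = exp (t • C)`, so the integrand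
`P t = S t Q (S t)^*` of `Q_∞` is norm-differentiable with `P' = C P + P C^*` and decays
like `e^{-2ιt}`. Integrating `P'` over `(0, ∞)` gives the Lyapunov equation
`C Q_∞ + Q_∞ C^* = -Q`; multiplying it by `(-C)⁻¹` on the left and by `((-C)⁻¹)^*` on the
right gives the identity, and adding `Q_∞ ((-C)⁻¹)^*` to both sides gives the symmetric part. -/

open MeasureTheory ContinuousLinearMap NormedSpace Set Filter Topology
open scoped RealInnerProductSpace

theorem eq_of_continuousOn_of_hasDerivAt_zero {F : Type*} [NormedAddCommGroup F]
    [NormedSpace ℝ F] {f : ℝ → F} {a b : ℝ} (hab : a < b) (hf : ContinuousOn f (Icc a b))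
    (hf' : ∀ x ∈ Ioo a b, HasDerivAt f 0 x) : f a = f b := by
  obtain ⟨c, hc⟩ := isOpen_Ioo.exists_is_const_of_deriv_eq_zero isPreconnected_Ioo
    (fun x hx ↦ (hf' x hx).differentiableAt.differentiableWithinAt)
    (fun x hx ↦ (hf' x hx).deriv)
  have hEq : EqOn f (fun _ ↦ c) (Icc a b) :=
    EqOn.of_subset_closure hc hf continuousOn_const Ioo_subset_Icc_self (closure_Ioo hab.ne).ge
  rw [hEq ⟨le_rfl, hab.le⟩, hEq ⟨hab.le, le_rfl⟩]

theorem eq_exp_smul_of_hasDerivAt {E : Type*} [NormedAddCommGroup E] [NormedSpace ℝ E]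
    [CompleteSpace E] {C : E →L[ℝ] E} {S : ℝ → E →L[ℝ] E} (hS0 : S 0 = 1)
    (hScont : ∀ x, Continuous fun t ↦ S t x)
    (hgen : ∀ x t, 0 < t → HasDerivAt (fun s ↦ S s x) (C (S t x)) t)
    {t : ℝ} (ht : 0 ≤ t) : S t = exp (t • C) := by
  rcases ht.eq_or_lt with rfl | ht
  · simp [hS0]
  ext x
  -- `u ↦ exp ((t - u) • C) (S u x)` is constant on `[0, t]`: `C` commutes with `exp (s • C)`
  have hexp : ∀ u, HasDerivAt (fun v : ℝ ↦ exp ((t - v) • C)) (-(C * exp ((t - u) • C))) u := by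
    intro u
    simpa [Function.comp_def] using
      (hasDerivAt_exp_smul_const' C (t - u)).scomp u ((hasDerivAt_id u).const_sub t)
  have hcomm : ∀ s : ℝ, C * exp (s • C) = exp (s • C) * C := fun s ↦
    (((Commute.refl C).smul_right s).exp_right).eq
  have hcont : Continuous fun u ↦ exp ((t - u) • C) (S u x) :=
    (continuous_iff_continuousAt.2 fun u ↦ (hexp u).continuousAt).clm_apply (hScont x)
  have key := eq_of_continuousOn_of_hasDerivAt_zero ht hcont.continuousOn
    (fun u hu ↦ by
      convert (hexp u).clm_apply (hgen x u hu.1) using 1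
      simp [hcomm])
  simpa [hS0] using key.symm

theorem integrableOn_Ioi_of_norm_le_exp {F : Type*} [NormedAddCommGroup F] {f : ℝ → F}
    (hf : AEStronglyMeasurable f (volume.restrict (Ioi 0))) {K c : ℝ} (hc : 0 < c)
    (hbound : ∀ t, 0 ≤ t → ‖f t‖ ≤ K * Real.exp (-c * t)) : IntegrableOn f (Ioi 0) := by
  refine ((exp_neg_integrableOn_Ioi 0 hc).const_mul K).mono' hf ?_
  filter_upwards [ae_restrict_mem measurableSet_Ioi] with t ht
  simpa [neg_mul] using hbound t (le_of_lt ht)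

theorem tendsto_zero_of_norm_le_exp {F : Type*} [NormedAddCommGroup F] {f : ℝ → F} {K c : ℝ}
    (hc : 0 < c) (hbound : ∀ t, 0 ≤ t → ‖f t‖ ≤ K * Real.exp (-c * t)) :
    Tendsto f atTop (𝓝 0) := by
  have hexp : Tendsto (fun t ↦ K * Real.exp (-c * t)) atTop (𝓝 0) := by
    simpa using (Real.tendsto_exp_atBot.comp
      (tendsto_id.const_mul_atTop_of_neg (neg_neg_of_pos hc))).const_mul K
  exact squeeze_zero_norm' (eventually_ge_atTop 0 |>.mono hbound) hexp

theorem adjoint_exp {𝕜 H : Type*} [RCLike 𝕜] [NormedAddCommGroup H] [InnerProductSpace 𝕜 H]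
    [CompleteSpace H] (A : H →L[𝕜] H) : adjoint (exp A) = exp (adjoint A) := by
  simp only [← star_eq_adjoint, star_exp]

section Lyapunov

variable {H : Type*} [NormedAddCommGroup H] [InnerProductSpace ℝ H] [CompleteSpace H]

noncomputable def lyapunovIntegrand (C Q : H →L[ℝ] H) (t : ℝ) : H →L[ℝ] H :=
  exp (t • C) ∘L Q ∘L adjoint (exp (t • C))

variable {C Q : H →L[ℝ] H}

theorem hasDerivAt_lyapunovIntegrand (t : ℝ) :
    HasDerivAt (lyapunovIntegrand C Q)
      (C ∘L lyapunovIntegrand C Q t + lyapunovIntegrand C Q t ∘L adjoint C) t := by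
  have hP : lyapunovIntegrand C Q = fun s ↦ exp (s • C) ∘L Q ∘L exp (s • adjoint C) := by
    ext1 s
    simp [lyapunovIntegrand, adjoint_exp]
  rw [hP]
  convert (hasDerivAt_exp_smul_const' C t).clm_comp
    ((hasDerivAt_const t Q).clm_comp (hasDerivAt_exp_smul_const (adjoint C) t)) using 1
  simp [mul_def, comp_assoc]

@[simp]
theorem lyapunovIntegrand_zero : lyapunovIntegrand C Q 0 = Q := by
  simp [lyapunovIntegrand, one_def, adjoint_id]

theorem differentiable_lyapunovIntegrand : Differentiable ℝ (lyapunovIntegrand C Q) :=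
  fun t ↦ (hasDerivAt_lyapunovIntegrand (C := C) (Q := Q) t).differentiableAt

variable {M ι : ℝ}

theorem norm_lyapunovIntegrand_le (hdecay : ∀ t, 0 ≤ t → ‖exp (t • C)‖ ≤ M * Real.exp (-ι * t))
    {t : ℝ} (ht : 0 ≤ t) :
    ‖lyapunovIntegrand C Q t‖ ≤ ‖Q‖ * M ^ 2 * Real.exp (-(2 * ι) * t) := by
  calc ‖lyapunovIntegrand C Q t‖ ≤ ‖exp (t • C)‖ * (‖Q‖ * ‖adjoint (exp (t • C))‖) :=
        (opNorm_comp_le _ _).trans (mul_le_mul_of_nonneg_left (opNorm_comp_le _ _) (norm_nonneg _))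
    _ = ‖Q‖ * ‖exp (t • C)‖ ^ 2 := by rw [LinearIsometryEquiv.norm_map]; ring
    _ ≤ ‖Q‖ * (M * Real.exp (-ι * t)) ^ 2 := by gcongr; exact hdecay t ht
    _ = ‖Q‖ * M ^ 2 * Real.exp (-ι * t) ^ 2 := by ring
    _ = ‖Q‖ * M ^ 2 * Real.exp (-(2 * ι) * t) := by
        rw [← Real.exp_nat_mul]; push_cast; ring_nf

theorem integrableOn_lyapunovIntegrand
    (hdecay : ∀ t, 0 ≤ t → ‖exp (t • C)‖ ≤ M * Real.exp (-ι * t)) (hι : 0 < ι) :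
    IntegrableOn (lyapunovIntegrand C Q) (Ioi 0) :=
  integrableOn_Ioi_of_norm_le_exp differentiable_lyapunovIntegrand.continuous.aestronglyMeasurable
    (by positivity) fun _ ↦ norm_lyapunovIntegrand_le hdecay

theorem lyapunov_equation (hdecay : ∀ t, 0 ≤ t → ‖exp (t • C)‖ ≤ M * Real.exp (-ι * t))
    (hι : 0 < ι) :
    C ∘L (∫ t in Ioi 0, lyapunovIntegrand C Q t)
      + (∫ t in Ioi 0, lyapunovIntegrand C Q t) ∘L adjoint C = -Q := by
  set P := lyapunovIntegrand C Q
  have hint : IntegrableOn P (Ioi 0) := integrableOn_lyapunovIntegrand hdecay hι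
  have hleft : IntegrableOn (fun t ↦ C ∘L P t) (Ioi 0) := (compL ℝ H H H C).integrable_comp hint
  have hright : IntegrableOn (fun t ↦ P t ∘L adjoint C) (Ioi 0) :=
    ((compL ℝ H H H).flip (adjoint C)).integrable_comp hint
  have hftc := integral_Ioi_of_hasDerivAt_of_tendsto'
    (fun t _ ↦ hasDerivAt_lyapunovIntegrand (C := C) (Q := Q) t) (hleft.add hright)
    (tendsto_zero_of_norm_le_exp (by positivity) fun _ ↦ norm_lyapunovIntegrand_le hdecay)
  have hL : ∫ t in Ioi 0, C ∘L P t = C ∘L ∫ t in Ioi 0, P t :=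
    (compL ℝ H H H C).integral_comp_comm hint
  have hR : ∫ t in Ioi 0, P t ∘L adjoint C = (∫ t in Ioi 0, P t) ∘L adjoint C :=
    ((compL ℝ H H H).flip (adjoint C)).integral_comp_comm hint
  rw [integral_add hleft hright, hL, hR] at hftc
  rwa [lyapunovIntegrand_zero, zero_sub] at hftc

end Lyapunov

theorem mul_eq_sub_of_sylvester {R : Type*} [Ring R] {c a x q ci d : R} (h : c * x + x * a = -q)
    (hc : ci * -c = 1) (ha : -a * d = 1) : ci * x = ci * q * d - x * d := by
  have hc' : ci * c = -1 := by rw [← neg_neg (ci * c), ← mul_neg, hc]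
  have ha' : a * d = -1 := by rw [← neg_neg (a * d), ← neg_mul, ha]
  calc ci * x = -(ci * x * (a * d)) := by rw [ha']; noncomm_ring
    _ = -(ci * (x * a) * d) := by noncomm_ring
    _ = -(ci * (-q - c * x) * d) := by rw [eq_sub_of_add_eq' h]
    _ = ci * q * d + ci * c * x * d := by noncomm_ring
    _ = ci * q * d - x * d := by rw [hc']; noncomm_ring

theorem stmt1_general
    {H : Type*} [NormedAddCommGroup H] [InnerProductSpace ℝ H] [CompleteSpace H]
    (C Q : H →L[ℝ] H)
    (S : ℝ → H →L[ℝ] H)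
    (hS0 : S 0 = 1)
    (hScont : ∀ x : H, Continuous fun t : ℝ => S t x)
    (hgen : ∀ (x : H) (t : ℝ), 0 < t → HasDerivAt (fun s : ℝ => S s x) (C (S t x)) t)
    (ι M₀ : ℝ) (hι : 0 < ι)
    (hdecay : ∀ t : ℝ, 0 ≤ t → ‖S t‖ ≤ M₀ * Real.exp (-ι * t))
    (Cinv : H →L[ℝ] H)
    (hCinv2 : Cinv ∘L (-C) = 1)
    (Qinf : H →L[ℝ] H)
    (hQinf : ∀ x : H,
      Qinf x = ∫ t in Set.Ioi (0 : ℝ), S t (Q ((ContinuousLinearMap.adjoint (S t)) x))) :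
    Cinv ∘L Qinf
        = (Cinv ∘L Q) ∘L ContinuousLinearMap.adjoint Cinv
          - Qinf ∘L ContinuousLinearMap.adjoint Cinv ∧
      (1 / 2 : ℝ) • (Cinv ∘L Qinf + Qinf ∘L ContinuousLinearMap.adjoint Cinv)
        = (1 / 2 : ℝ) • ((Cinv ∘L Q) ∘L ContinuousLinearMap.adjoint Cinv) := by
  have hSexp : ∀ t, 0 ≤ t → S t = exp (t • C) := fun t ht ↦
    eq_exp_smul_of_hasDerivAt hS0 hScont hgen ht
  have hdecayC : ∀ t, 0 ≤ t → ‖exp (t • C)‖ ≤ M₀ * Real.exp (-ι * t) := fun t ht ↦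
    hSexp t ht ▸ hdecay t ht
  have hQinf_eq : Qinf = ∫ t in Ioi 0, lyapunovIntegrand C Q t := by
    ext x
    rw [hQinf, integral_apply (integrableOn_lyapunovIntegrand hdecayC hι)]
    refine setIntegral_congr_fun measurableSet_Ioi fun t ht ↦ ?_
    simp [lyapunovIntegrand, hSexp t (le_of_lt ht)]
  have hlyap := lyapunov_equation (Q := Q) hdecayC hι
  rw [← hQinf_eq] at hlyap
  have hadj : (-adjoint C) ∘L adjoint Cinv = 1 := by
    rw [← map_neg, ← adjoint_comp, hCinv2, one_def, adjoint_id]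
  have hfirst : Cinv ∘L Qinf = (Cinv ∘L Q) ∘L adjoint Cinv - Qinf ∘L adjoint Cinv :=
    mul_eq_sub_of_sylvester hlyap hCinv2 hadj
  refine ⟨hfirst, ?_⟩
  rw [hfirst]
  congr 1
  abel

/-- With `Q_∞ = ∫₀^∞ e^{Ct} Q (e^{Ct})^* dt`, integration by parts gives
`(-C)⁻¹ Q_∞ = (-C)⁻¹ Q ((-C)⁻¹)^* − Q_∞ ((-C)⁻¹)^*`, hence the symmetric part of
`(-C)⁻¹ Q_∞` equals `(1/2)(-C)⁻¹ Q ((-C)⁻¹)^*`. -/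
theorem stmt1
    {H : Type*} [NormedAddCommGroup H] [InnerProductSpace ℝ H] [CompleteSpace H]
    (C Q : H →L[ℝ] H)
    (hQsym : ContinuousLinearMap.adjoint Q = Q)
    (hQpos : ∀ x : H, 0 ≤ ⟪Q x, x⟫)
    (S : ℝ → H →L[ℝ] H)
    (hS0 : S 0 = 1)
    (hSadd : ∀ s t : ℝ, 0 ≤ s → 0 ≤ t → S (s + t) = S s ∘L S t)
    (hScont : ∀ x : H, Continuous fun t : ℝ => S t x)
    (hgen : ∀ (x : H) (t : ℝ), 0 < t → HasDerivAt (fun s : ℝ => S s x) (C (S t x)) t)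
    (ι M₀ : ℝ) (hι : 0 < ι) (hM₀ : 0 < M₀)
    (hdecay : ∀ t : ℝ, 0 ≤ t → ‖S t‖ ≤ M₀ * Real.exp (-ι * t))
    (Cinv : H →L[ℝ] H)
    (hCinv1 : (-C) ∘L Cinv = 1) (hCinv2 : Cinv ∘L (-C) = 1)
    (Qinf : H →L[ℝ] H)
    (hQinf : ∀ x : H,
      Qinf x = ∫ t in Set.Ioi (0 : ℝ), S t (Q ((ContinuousLinearMap.adjoint (S t)) x))) :
    Cinv ∘L Qinf
        = (Cinv ∘L Q) ∘L ContinuousLinearMap.adjoint Cinv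
          - Qinf ∘L ContinuousLinearMap.adjoint Cinv ∧
      (1 / 2 : ℝ) • (Cinv ∘L Qinf + Qinf ∘L ContinuousLinearMap.adjoint Cinv)
        = (1 / 2 : ℝ) • ((Cinv ∘L Q) ∘L ContinuousLinearMap.adjoint Cinv) :=
  stmt1_general C Q S hS0 hScont hgen ι M₀ hι hdecay Cinv hCinv2 Qinf hQinf
end

section
/- Suppose a sequence of random variables satisfies E‖X^ε − X⁰‖ ≲ ε^{β} and E‖X^ε − X^η‖ ≲ ε^{-c} |ε − η|^{κ} for 0 < ε < η ≤ 1 with constants β, κ, c > 0. Then there exists κ' > 0 such that E‖X^ε − X^η‖ ≲ |ε − η|^{κ'} for all ε, η ∈ [0,1]. -/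
/-!
Write `δ = η - ε` for `0 ≤ ε < η ≤ 1` and fix a threshold `δ ^ γ`. If `ε ≥ δ ^ γ`, the singular
bound costs at most `ε ^ (-c) ≤ δ ^ (-γ c)`, leaving `δ ^ (κ - γ c)`. If `ε < δ ^ γ`, both `ε` and
`η ≤ ε + δ` are of order `δ ^ γ`, so the triangle inequality through `X⁰` and the rate give
`δ ^ (γ β)`. Any `0 < γ < κ / c` makes both exponents positive.
-/

open MeasureTheory Set Real

lemma rpow_neg_mul_rpow_le_of_rpow_le {δ ε γ c κ : ℝ} (hδ : 0 < δ) (hc : 0 ≤ c)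
    (h : δ ^ γ ≤ ε) : ε ^ (-c) * δ ^ κ ≤ δ ^ (κ - γ * c) := by
  calc ε ^ (-c) * δ ^ κ ≤ (δ ^ γ) ^ (-c) * δ ^ κ := by
        have := rpow_le_rpow_of_nonpos (by positivity) h (neg_nonpos.2 hc)
        gcongr
    _ = δ ^ (κ - γ * c) := by
        rw [← rpow_mul hδ.le, ← rpow_add hδ]
        ring_nf

lemma add_rpow_le_two_rpow_mul_rpow_of_lt_rpow {ε δ γ β : ℝ} (hε : 0 ≤ ε) (hδ : 0 < δ)
    (hδ₁ : δ ≤ 1) (hγ : γ ≤ 1) (hβ : 0 ≤ β) (h : ε < δ ^ γ) :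
    (ε + δ) ^ β ≤ 2 ^ β * δ ^ (γ * β) := by
  have hδγ : δ ≤ δ ^ γ := by
    simpa using rpow_le_rpow_of_exponent_ge hδ hδ₁ hγ
  calc (ε + δ) ^ β ≤ (2 * δ ^ γ) ^ β := by gcongr; linarith
    _ = 2 ^ β * δ ^ (γ * β) := by
        rw [mul_rpow zero_le_two (by positivity), ← rpow_mul hδ.le]

lemma integral_norm_sub_le_add {Ω V : Type*} [MeasurableSpace Ω] [NormedAddCommGroup V]
    {μ : Measure Ω} {f g h : Ω → V} (hf : Integrable f μ) (hg : Integrable g μ)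
    (hh : Integrable h μ) :
    ∫ ω, ‖f ω - g ω‖ ∂μ ≤ ∫ ω, ‖f ω - h ω‖ ∂μ + ∫ ω, ‖h ω - g ω‖ ∂μ := by
  have hfh : Integrable (fun ω => ‖f ω - h ω‖) μ := (hf.sub hh).norm
  have hhg : Integrable (fun ω => ‖h ω - g ω‖) μ := (hh.sub hg).norm
  calc ∫ ω, ‖f ω - g ω‖ ∂μ ≤ ∫ ω, (‖f ω - h ω‖ + ‖h ω - g ω‖) ∂μ :=
        integral_mono (hf.sub hg).norm (hfh.add hhg) fun _ =>
          norm_sub_le_norm_sub_add_norm_sub _ _ _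
    _ = _ := integral_add hfh hhg

section Interpolation

variable {d : ℝ → ℝ → ℝ} {β κ c C₁ C₂ : ℝ}

lemma le_add_rpow_of_lt {γ ε η : ℝ} (hβ : 0 ≤ β) (hc : 0 ≤ c) (hγ : γ ≤ 1)
    (hC₁ : 0 ≤ C₁) (hC₂ : 0 ≤ C₂)
    (htri : ∀ a ∈ Icc (0 : ℝ) 1, ∀ b ∈ Icc (0 : ℝ) 1, d a b ≤ d a 0 + d 0 b)
    (hsymm : ∀ a b, d a b = d b a)
    (hrate : ∀ a ∈ Icc (0 : ℝ) 1, d a 0 ≤ C₁ * a ^ β)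
    (hdiff : ∀ a b : ℝ, 0 < a → a < b → b ≤ 1 → d a b ≤ C₂ * a ^ (-c) * (b - a) ^ κ)
    (hε : 0 ≤ ε) (hεη : ε < η) (hη : η ≤ 1) :
    d ε η ≤ C₂ * (η - ε) ^ (κ - γ * c) + 2 * C₁ * 2 ^ β * (η - ε) ^ (γ * β) := by
  set δ := η - ε
  have hδ : 0 < δ := sub_pos.2 hεη
  have hδ₁ : δ ≤ 1 := by linarith
  rcases le_or_gt (δ ^ γ) ε with hbig | hsmall
  · have hε₀ : 0 < ε := (rpow_pos_of_pos hδ γ).trans_le hbig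
    calc d ε η ≤ C₂ * (ε ^ (-c) * δ ^ κ) := by
          rw [← mul_assoc]; exact hdiff ε η hε₀ hεη hη
      _ ≤ C₂ * δ ^ (κ - γ * c) := by
          gcongr; exact rpow_neg_mul_rpow_le_of_rpow_le hδ hc hbig
      _ ≤ _ := le_add_of_nonneg_right (by positivity)
  · calc d ε η ≤ d ε 0 + d η 0 := by
          rw [← hsymm 0 η]; exact htri ε ⟨hε, by linarith⟩ η ⟨by linarith, hη⟩
      _ ≤ C₁ * ε ^ β + C₁ * η ^ β :=
          add_le_add (hrate ε ⟨hε, by linarith⟩) (hrate η ⟨by linarith, hη⟩)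
      _ ≤ C₁ * η ^ β + C₁ * η ^ β := by gcongr
      _ = 2 * C₁ * (ε + δ) ^ β := by rw [show η = ε + δ by ring]; ring
      _ ≤ 2 * C₁ * (2 ^ β * δ ^ (γ * β)) := by
          gcongr; exact add_rpow_le_two_rpow_mul_rpow_of_lt_rpow hε hδ hδ₁ hγ hβ hsmall
      _ ≤ _ := by
          rw [← mul_assoc]; exact le_add_of_nonneg_left (by positivity)

lemma exists_rpow_bound_of_rate_of_singular_bound (hβ : 0 < β) (hκ : 0 < κ) (hc : 0 < c)
    (htri : ∀ a ∈ Icc (0 : ℝ) 1, ∀ b ∈ Icc (0 : ℝ) 1, d a b ≤ d a 0 + d 0 b)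
    (hsymm : ∀ a b, d a b = d b a) (hself : ∀ a, d a a = 0)
    (hrate : ∀ a ∈ Ioc (0 : ℝ) 1, d a 0 ≤ C₁ * a ^ β)
    (hdiff : ∀ a b : ℝ, 0 < a → a < b → b ≤ 1 → d a b ≤ C₂ * a ^ (-c) * |a - b| ^ κ) :
    ∃ κ' : ℝ, 0 < κ' ∧ ∃ C₃ : ℝ, ∀ ε ∈ Icc (0 : ℝ) 1, ∀ η ∈ Icc (0 : ℝ) 1,
      d ε η ≤ C₃ * |ε - η| ^ κ' := by
  set γ := min (κ / (2 * c)) 1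
  have hγ : 0 < γ := lt_min (by positivity) one_pos
  have hγc : γ * c ≤ κ / 2 := by
    calc γ * c ≤ κ / (2 * c) * c := by gcongr; exact min_le_left _ _
      _ = κ / 2 := by field_simp
  set κ' := min (κ - γ * c) (γ * β)
  have hκ' : 0 < κ' := lt_min (by linarith) (by positivity)
  have hrate' : ∀ a ∈ Icc (0 : ℝ) 1, d a 0 ≤ |C₁| * a ^ β := by
    rintro a ⟨ha₀, ha₁⟩
    rcases ha₀.eq_or_lt with rfl | ha₀
    · simp [hself, zero_rpow hβ.ne']
    · exact (hrate a ⟨ha₀, ha₁⟩).trans (by gcongr; exact le_abs_self _)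
  have hdiff' : ∀ a b : ℝ, 0 < a → a < b → b ≤ 1 →
      d a b ≤ |C₂| * a ^ (-c) * (b - a) ^ κ := by
    intro a b ha hab hb
    have h := hdiff a b ha hab hb
    rw [abs_sub_comm, abs_of_pos (sub_pos.2 hab)] at h
    exact h.trans (by gcongr; exact le_abs_self _)
  refine ⟨κ', hκ', |C₂| + 2 * |C₁| * 2 ^ β, ?_⟩
  have hlt : ∀ ε ∈ Icc (0 : ℝ) 1, ∀ η ∈ Icc (0 : ℝ) 1, ε < η →
      d ε η ≤ (|C₂| + 2 * |C₁| * 2 ^ β) * |ε - η| ^ κ' := by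
    intro ε hε η hη hεη
    rw [abs_sub_comm, abs_of_pos (sub_pos.2 hεη), add_mul]
    have hδ : 0 < η - ε := sub_pos.2 hεη
    have hδ₁ : η - ε ≤ 1 := by linarith [hε.1, hη.2]
    refine (le_add_rpow_of_lt (γ := γ) hβ.le hc.le (min_le_right _ _) (abs_nonneg _) (abs_nonneg _)
      htri hsymm hrate' hdiff' hε.1 hεη hη.2).trans ?_
    have hκ'_le_sing := rpow_le_rpow_of_exponent_ge hδ hδ₁ (min_le_left (κ - γ * c) (γ * β))
    have hκ'_le_small := rpow_le_rpow_of_exponent_ge hδ hδ₁ (min_le_right (κ - γ * c) (γ * β))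
    gcongr
  intro ε hε η hη
  rcases lt_trichotomy ε η with hεη | rfl | hηε
  · exact hlt ε hε η hη hεη
  · simp [hself, zero_rpow hκ'.ne']
  · rw [hsymm, abs_sub_comm]; exact hlt η hη ε hε hηε

end Interpolation

theorem stmt17_general {V Ω : Type*}
    [NormedAddCommGroup V] [MeasurableSpace Ω]
    (P : Measure Ω)
    (X : ℝ → Ω → V)
    (hmeas : ∀ ε : ℝ, AEStronglyMeasurable (X ε) P)
    (hint : ∀ ε ∈ Set.Icc (0 : ℝ) 1, Integrable (fun ω => ‖X ε ω‖) P)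
    (β κ c : ℝ) (hβ : 0 < β) (hκ : 0 < κ) (hc : 0 < c)
    (C₁ C₂ : ℝ)
    (hrate : ∀ ε ∈ Set.Ioc (0 : ℝ) 1,
      ∫ ω, ‖X ε ω - X 0 ω‖ ∂P ≤ C₁ * ε ^ β)
    (hdiff : ∀ ε η : ℝ, 0 < ε → ε < η → η ≤ 1 →
      ∫ ω, ‖X ε ω - X η ω‖ ∂P ≤ C₂ * ε ^ (-c) * |ε - η| ^ κ) :
    ∃ κ' : ℝ, 0 < κ' ∧ ∃ C₃ : ℝ, ∀ ε ∈ Set.Icc (0 : ℝ) 1, ∀ η ∈ Set.Icc (0 : ℝ) 1,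
      ∫ ω, ‖X ε ω - X η ω‖ ∂P ≤ C₃ * |ε - η| ^ κ' := by
  have hX : ∀ ε ∈ Icc (0 : ℝ) 1, Integrable (X ε) P := fun ε hε =>
    (integrable_norm_iff (hmeas ε)).1 (hint ε hε)
  refine exists_rpow_bound_of_rate_of_singular_bound (d := fun a b => ∫ ω, ‖X a ω - X b ω‖ ∂P)
    hβ hκ hc (fun a ha b hb => ?_) (fun a b => by simp only [norm_sub_rev]) (fun a => by simp)
    hrate hdiff
  exact integral_norm_sub_le_add (hX a ha) (hX b hb) (hX 0 ⟨le_rfl, zero_le_one⟩)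

/-- Interpolation of rates: if a family of Banach-space-valued random variables satisfies
`E‖X^ε − X⁰‖ ≲ ε^β` and `E‖X^ε − X^η‖ ≲ ε^{-c}|ε − η|^κ` for `0 < ε < η ≤ 1`, then there is
`κ' > 0` with `E‖X^ε − X^η‖ ≲ |ε − η|^{κ'}` for all `ε, η ∈ [0,1]`. -/
theorem stmt17 {V Ω : Type*}
    [NormedAddCommGroup V] [MeasurableSpace Ω]
    (P : Measure Ω) [IsProbabilityMeasure P]
    (X : ℝ → Ω → V)
    (hmeas : ∀ ε : ℝ, AEStronglyMeasurable (X ε) P)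
    (hint : ∀ ε ∈ Set.Icc (0 : ℝ) 1, Integrable (fun ω => ‖X ε ω‖) P)
    (β κ c : ℝ) (hβ : 0 < β) (hκ : 0 < κ) (hc : 0 < c)
    (C₁ C₂ : ℝ)
    (hrate : ∀ ε ∈ Set.Ioc (0 : ℝ) 1,
      ∫ ω, ‖X ε ω - X 0 ω‖ ∂P ≤ C₁ * ε ^ β)
    (hdiff : ∀ ε η : ℝ, 0 < ε → ε < η → η ≤ 1 →
      ∫ ω, ‖X ε ω - X η ω‖ ∂P ≤ C₂ * ε ^ (-c) * |ε - η| ^ κ) :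
    ∃ κ' : ℝ, 0 < κ' ∧ ∃ C₃ : ℝ, ∀ ε ∈ Set.Icc (0 : ℝ) 1, ∀ η ∈ Set.Icc (0 : ℝ) 1,
      ∫ ω, ‖X ε ω - X η ω‖ ∂P ≤ C₃ * |ε - η| ^ κ' :=
  stmt17_general P X hmeas hint β κ c hβ hκ hc C₁ C₂ hrate hdiff
end
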